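/- arXiv:1607.01383 — 10 statements merged into one kernel-verified Lean document; each statement's English description precedes it below -/
import Mathlib

section
/- Let G be an m×n real matrix and P̃ > 0, and suppose the largest eigenvalue λmax of the symmetric matrix GᵀG is simple (has multiplicity one). Then every n×n real symmetric positive semidefinite matrix Q with tr(Q) = P̃ that maximizes tr(G Q Gᵀ) over this constraint set has rank one; specifically, Q = P̃·q qᵀ where q is a unit-norm eigenvector of GᵀG associated with λmax. -/
/-!
Diagonalize `GᵀG = U diag(λ) Uᵀ` and put `R = Uᵀ Q U`, again PSD with trace `P̃`. Then
`tr (G Q Gᵀ) = tr (GᵀG Q) = ∑ λᵢ Rᵢᵢ ≤ λmax P̃`, and `P̃ q qᵀ` attains this bound, so for a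
maximizer `∑ (λmax - λᵢ) Rᵢᵢ = 0` with nonnegative terms. As `λᵢ < λmax` off the top index `i₀`,
the diagonal of `R` vanishes there, and a PSD matrix with a zero diagonal entry has a zero row and
column at that entry. Hence `R = P̃ eᵢ₀ eᵢ₀ᵀ` and `Q = U R Uᵀ = P̃ q qᵀ`.
-/

open Matrix
open scoped ComplexOrder

theorem Fintype.eq_zero_of_mul_sum_le_sum_mul {ι R : Type*} [Fintype ι] [Ring R] [PartialOrder R]
    [IsOrderedRing R] [NoZeroDivisors R] {f w : ι → R} {c : R} (hf : ∀ i, f i ≤ c)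
    (hw : ∀ i, 0 ≤ w i) (hsum : c * ∑ i, w i ≤ ∑ i, f i * w i) {i : ι} (hi : f i ≠ c) :
    w i = 0 := by
  have hgap : ∀ j ∈ Finset.univ, 0 ≤ (c - f j) * w j :=
    fun j _ ↦ mul_nonneg (sub_nonneg.mpr (hf j)) (hw j)
  have hzero : ∑ j, (c - f j) * w j = 0 := by
    refine le_antisymm ?_ (Finset.sum_nonneg hgap)
    simpa [sub_mul, Finset.sum_sub_distrib, Finset.mul_sum] using hsum
  have hgap_i := (Finset.sum_eq_zero_iff_of_nonneg hgap).mp hzero i (Finset.mem_univ i)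
  exact (mul_eq_zero.mp hgap_i).resolve_left (sub_ne_zero.mpr hi.symm)

namespace Matrix

variable {n 𝕜 : Type*} [Fintype n] [DecidableEq n]

theorem PosSemidef.apply_eq_zero_of_diag_eq_zero [RCLike 𝕜] {R : Matrix n n 𝕜}
    (hR : R.PosSemidef) {j : n} (hj : R j j = 0) (i : n) : R i j = 0 := by
  have hcol : R *ᵥ Pi.single j 1 = 0 :=
    (hR.dotProduct_mulVec_zero_iff _).mp (by simpa [mulVec_single_one] using hj)
  simpa [mulVec_single_one] using congrFun hcol i

theorem PosSemidef.eq_diagonal_single_of_diag_eq_zero [RCLike 𝕜] {R : Matrix n n 𝕜}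
    (hR : R.PosSemidef) {i₀ : n} (h : ∀ i ≠ i₀, R i i = 0) :
    R = diagonal (Pi.single i₀ R.trace) := by
  have htrace : R.trace = R i₀ i₀ :=
    Finset.sum_eq_single i₀ (fun i _ hi ↦ h i hi) (by simp)
  ext i j
  by_cases hj : j = i₀
  · by_cases hi : i = i₀
    · subst hi hj; simp [htrace]
    · rw [← hR.1.apply i j, hR.apply_eq_zero_of_diag_eq_zero (h i hi)]
      simp [hi, hj]
  · rw [hR.apply_eq_zero_of_diag_eq_zero (h j hj), diagonal_apply]
    split_ifs with hij <;> simp [hij, hj]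

theorem rank_diagonal_single {K : Type*} [Field K] (i : n) {c : K} (hc : c ≠ 0) :
    (diagonal (Pi.single i c)).rank = 1 := by
  classical
  rw [rank_diagonal, Fintype.card_eq_one_iff]
  refine ⟨⟨i, by simpa using hc⟩, fun ⟨j, hj⟩ ↦ Subtype.ext ?_⟩
  change j = i
  exact not_not.mp fun hji ↦ hj (by simp [hji])

theorem mul_diagonal_single_mul_transpose {R : Type*} [CommSemiring R] (U : Matrix n n R) (i : n)
    (c : R) : U * diagonal (Pi.single i c) * Uᵀ = c • vecMulVec (Uᵀ i) (Uᵀ i) := by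
  ext j k
  simp [mul_apply, diagonal_apply, Pi.single_apply, vecMulVec_apply]
  ring

namespace IsHermitian

variable {A : Matrix n n ℝ} (hA : A.IsHermitian)

theorem trace_mul_eq_sum_eigenvalues_mul (Q : Matrix n n ℝ) :
    (A * Q).trace = ∑ i, hA.eigenvalues i *
      (star (hA.eigenvectorUnitary : Matrix n n ℝ) * Q * hA.eigenvectorUnitary) i i := by
  set U : Matrix n n ℝ := (hA.eigenvectorUnitary : Matrix n n ℝ)
  conv_lhs => rw [hA.spectral_theorem, Unitary.conjStarAlgAut_apply]
  calc _ = (U * (diagonal hA.eigenvalues * star U * Q)).trace := by simp [U, Matrix.mul_assoc]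
    _ = (diagonal hA.eigenvalues * (star U * Q * U)).trace := by
      rw [trace_mul_comm]; simp only [Matrix.mul_assoc]
    _ = _ := by simp [trace, diagonal_mul]

theorem eigenvectorUnitary_mul_diagonal_single_mul_star (i : n) (c : ℝ) :
    (hA.eigenvectorUnitary : Matrix n n ℝ) * diagonal (Pi.single i c) *
        star (hA.eigenvectorUnitary : Matrix n n ℝ) =
      c • vecMulVec ⇑(hA.eigenvectorBasis i) ⇑(hA.eigenvectorBasis i) := by
  rw [star_eq_conjTranspose, conjTranspose_eq_transpose_of_trivial,
    mul_diagonal_single_mul_transpose]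
  rfl

theorem dotProduct_eigenvectorBasis_self (i : n) :
    ⇑(hA.eigenvectorBasis i) ⬝ᵥ ⇑(hA.eigenvectorBasis i) = 1 := by
  simpa [mul_apply, dotProduct] using
    congrFun (congrFun (Unitary.coe_star_mul_self hA.eigenvectorUnitary) i) i

theorem trace_mul_smul_vecMulVec_eigenvectorBasis (i : n) (c : ℝ) :
    (A * (c • vecMulVec ⇑(hA.eigenvectorBasis i) ⇑(hA.eigenvectorBasis i))).trace =
      hA.eigenvalues i * c := by
  rw [Matrix.mul_smul, mul_vecMulVec, trace_smul, trace_vecMulVec, mulVec_eigenvectorBasis,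
    smul_dotProduct, dotProduct_eigenvectorBasis_self, smul_eq_mul, smul_eq_mul, mul_one,
    mul_comm]

theorem rank_smul_vecMulVec_eigenvectorBasis (i : n) {c : ℝ} (hc : c ≠ 0) :
    (c • vecMulVec ⇑(hA.eigenvectorBasis i) ⇑(hA.eigenvectorBasis i)).rank = 1 := by
  have hU := (isUnit_iff_isUnit_det _).mp (Unitary.isUnit_coe (U := hA.eigenvectorUnitary))
  have hU' := (isUnit_iff_isUnit_det _).mp
    (Unitary.isUnit_coe (U := hA.eigenvectorUnitary)).star
  rw [← eigenvectorUnitary_mul_diagonal_single_mul_star, rank_mul_eq_left_of_isUnit_det _ _ hU',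
    rank_mul_eq_right_of_isUnit_det _ _ hU, rank_diagonal_single i hc]

theorem eq_trace_smul_vecMulVec_of_le_trace_mul {R : Matrix n n ℝ} (hR : R.PosSemidef) {i₀ : n}
    (htop : ∀ i ≠ i₀, hA.eigenvalues i < hA.eigenvalues i₀)
    (hR_top : hA.eigenvalues i₀ * R.trace ≤ (A * R).trace) :
    R = R.trace • vecMulVec ⇑(hA.eigenvectorBasis i₀) ⇑(hA.eigenvectorBasis i₀) := by
  set U : Matrix n n ℝ := (hA.eigenvectorUnitary : Matrix n n ℝ)
  have hU : U * star U = 1 := Unitary.coe_mul_star_self _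
  have hS : (star U * R * U).PosSemidef := hR.conjTranspose_mul_mul_same U
  have hS_tr : (star U * R * U).trace = R.trace := by
    rw [trace_mul_cycle, hU, Matrix.one_mul]
  have hS_diag : star U * R * U = diagonal (Pi.single i₀ R.trace) := by
    rw [hS.eq_diagonal_single_of_diag_eq_zero fun i hi ↦ ?_, hS_tr]
    refine Fintype.eq_zero_of_mul_sum_le_sum_mul (w := fun j ↦ (star U * R * U) j j)
      (fun j ↦ ?_) (fun _ ↦ hS.diag_nonneg) ?_ (htop i hi).ne
    · rcases eq_or_ne j i₀ with rfl | hj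
      exacts [le_rfl, (htop j hj).le]
    · rw [hA.trace_mul_eq_sum_eigenvalues_mul, ← hS_tr] at hR_top
      exact hR_top
  calc R = U * (star U * R * U) * star U := by
        simp only [← Matrix.mul_assoc, hU, Matrix.one_mul]
        rw [Matrix.mul_assoc, hU, Matrix.mul_one]
    _ = _ := by rw [hS_diag, eigenvectorUnitary_mul_diagonal_single_mul_star]

end IsHermitian

end Matrix

/-- If the largest eigenvalue `λmax` of `GᵀG` is simple, then every
`n × n` real symmetric PSD matrix `Q` with `tr Q = P̃` maximizing `tr (G Q Gᵀ)` over
this constraint set has rank one; specifically `Q = P̃ · q qᵀ` where `q` is a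
unit-norm eigenvector of `GᵀG` associated with `λmax`. -/
theorem stmt_2 {m n : ℕ} (G : Matrix (Fin m) (Fin n) ℝ) (Ptil : ℝ) (hP : 0 < Ptil)
    (lmax : ℝ) (hGG : (Gᵀ * G).IsHermitian)
    (hlmax : IsGreatest (Set.range hGG.eigenvalues) lmax)
    (hsimple : ∃! i : Fin n, hGG.eigenvalues i = lmax)
    (Q : Matrix (Fin n) (Fin n) ℝ) (hQ : Q.PosSemidef) (hQtr : Q.trace = Ptil)
    (hQmax : ∀ Q' : Matrix (Fin n) (Fin n) ℝ, Q'.PosSemidef → Q'.trace = Ptil →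
      (G * Q' * Gᵀ).trace ≤ (G * Q * Gᵀ).trace) :
    Q.rank = 1 ∧
    ∃ q : Fin n → ℝ, q ⬝ᵥ q = 1 ∧ (Gᵀ * G) *ᵥ q = lmax • q ∧
      Q = Ptil • vecMulVec q q := by
  obtain ⟨i₀, rfl, hunique⟩ := hsimple
  have htop : ∀ i ≠ i₀, hGG.eigenvalues i < hGG.eigenvalues i₀ := fun i hi ↦
    (hlmax.2 ⟨i, rfl⟩).lt_of_ne fun h ↦ hi (hunique i h)
  set q : Fin n → ℝ := ⇑(hGG.eigenvectorBasis i₀)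
  have hq : q ⬝ᵥ q = 1 := hGG.dotProduct_eigenvectorBasis_self i₀
  have hQ₀ : (Ptil • vecMulVec q q).PosSemidef := by
    simpa using (posSemidef_vecMulVec_self_star q).smul hP.le
  have hQ₀_tr : (Ptil • vecMulVec q q).trace = Ptil := by
    rw [trace_smul, trace_vecMulVec, hq, smul_eq_mul, mul_one]
  have hQq : Q = Ptil • vecMulVec q q := by
    rw [← hQtr]
    refine hGG.eq_trace_smul_vecMulVec_of_le_trace_mul hQ htop ?_
    calc hGG.eigenvalues i₀ * Q.trace = (Gᵀ * G * (Ptil • vecMulVec q q)).trace := by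
          rw [hGG.trace_mul_smul_vecMulVec_eigenvectorBasis, hQtr]
      _ ≤ (Gᵀ * G * Q).trace := by
          simpa only [trace_mul_cycle G _ Gᵀ] using hQmax _ hQ₀ hQ₀_tr
  refine ⟨?_, q, hq, hGG.mulVec_eigenvectorBasis i₀, hQq⟩
  rw [hQq]
  exact hGG.rank_smul_vecMulVec_eigenvectorBasis i₀ hP.ne'
end

section
/- Let Q and M be n×n real symmetric positive semidefinite matrices, let N be an n×n real symmetric positive definite matrix, and suppose Q·M = 0 (the zero matrix). Then (Q+N)⁻¹ + M is invertible, and the matrix Ñ := ((Q+N)⁻¹ + M)⁻¹ − Q satisfies Ñ = (N⁻¹ + M)⁻¹. In particular, Ñ is symmetric positive definite and Ñ ⪯ N. -/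
open Matrix

/-- Let `Q, M` be real symmetric PSD, `N` real symmetric positive
definite, and `Q·M = 0`. Then `(Q+N)⁻¹ + M` is invertible, and
`Ñ := ((Q+N)⁻¹ + M)⁻¹ − Q` satisfies `Ñ = (N⁻¹ + M)⁻¹`; in particular `Ñ` is
symmetric positive definite and `Ñ ⪯ N`. -/
theorem stmt_3 {n : ℕ} (Q M N : Matrix (Fin n) (Fin n) ℝ)
    (hQ : Q.PosSemidef) (hM : M.PosSemidef) (hN : N.PosDef)
    (hQM : Q * M = 0) :
    IsUnit ((Q + N)⁻¹ + M) ∧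
    ((Q + N)⁻¹ + M)⁻¹ - Q = (N⁻¹ + M)⁻¹ ∧
    (((Q + N)⁻¹ + M)⁻¹ - Q).PosDef ∧
    (N - (((Q + N)⁻¹ + M)⁻¹ - Q)).PosSemidef := by
  set S : Matrix (Fin n) (Fin n) ℝ := (N⁻¹ + M)⁻¹ with hSdef
  have hNinv : (N⁻¹).PosDef := hN.inv
  have hNinvM : (N⁻¹ + M).PosDef := hNinv.add_posSemidef hM
  have hS : S.PosDef := hNinvM.inv
  have hP : (Q + N).PosDef := Matrix.PosDef.posSemidef_add hQ hN
  have hPinv : ((Q + N)⁻¹).PosDef := hP.inv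
  have hA : ((Q + N)⁻¹ + M).PosDef := hPinv.add_posSemidef hM
  -- basic inverse facts
  have hP2 : (Q + N) * (Q + N)⁻¹ = 1 :=
    mul_nonsing_inv _ ((isUnit_iff_isUnit_det _).1 hP.isUnit)
  have hP1 : (Q + N)⁻¹ * (Q + N) = 1 :=
    nonsing_inv_mul _ ((isUnit_iff_isUnit_det _).1 hP.isUnit)
  have hS1 : (N⁻¹ + M) * S = 1 :=
    mul_nonsing_inv _ ((isUnit_iff_isUnit_det _).1 hNinvM.isUnit)
  have hS2 : S * (N⁻¹ + M) = 1 :=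
    nonsing_inv_mul _ ((isUnit_iff_isUnit_det _).1 hNinvM.isUnit)
  have hN1 : N * N⁻¹ = 1 :=
    mul_nonsing_inv _ ((isUnit_iff_isUnit_det _).1 hN.isUnit)
  have hN2 : N⁻¹ * N = 1 :=
    nonsing_inv_mul _ ((isUnit_iff_isUnit_det _).1 hN.isUnit)
  have hMt : Mᵀ = M := by simpa using hM.isHermitian.eq
  have hQt : Qᵀ = Q := by simpa using hQ.isHermitian.eq
  have hSt : Sᵀ = S := by simpa using hS.isHermitian.eq
  have hMQ : M * Q = 0 := by
    have := congrArg transpose hQM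
    simpa [transpose_mul, hMt, hQt] using this
  -- N * M * S = N - S
  have hNMS : N * M * S = N - S := by
    have h : N * ((N⁻¹ + M) * S) = N := by rw [hS1, mul_one]
    have h' : S + N * M * S = N := by
      calc S + N * M * S = N * ((N⁻¹ + M) * S) := by
            rw [← Matrix.mul_assoc, Matrix.mul_add, hN1, Matrix.add_mul, Matrix.one_mul]
        _ = N := h
    linear_combination (norm := noncomm_ring) h'
  -- key: ((Q+N)⁻¹ + M) * (Q + S) = 1
  have hkey : ((Q + N)⁻¹ + M) * (Q + S) = 1 := by
    have h1 : (Q + N) * (((Q + N)⁻¹ + M) * (Q + S)) = Q + N := by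
      have e1 : (Q + N) * ((Q + N)⁻¹ + M) = 1 + (Q + N) * M := by
        rw [Matrix.mul_add, hP2]
      calc (Q + N) * (((Q + N)⁻¹ + M) * (Q + S))
          = ((Q + N) * ((Q + N)⁻¹ + M)) * (Q + S) := by rw [Matrix.mul_assoc]
        _ = (1 + (Q + N) * M) * (Q + S) := by rw [e1]
        _ = Q + S + Q * M * Q + N * (M * Q) + N * M * S + Q * M * S := by
            noncomm_ring
        _ = Q + N := by rw [hQM, hMQ, hNMS]; noncomm_ring
    calc ((Q + N)⁻¹ + M) * (Q + S)
        = ((Q + N)⁻¹ * (Q + N)) * (((Q + N)⁻¹ + M) * (Q + S)) := by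
          rw [hP1, Matrix.one_mul]
      _ = (Q + N)⁻¹ * ((Q + N) * (((Q + N)⁻¹ + M) * (Q + S))) := by
          rw [Matrix.mul_assoc]
      _ = (Q + N)⁻¹ * (Q + N) := by rw [h1]
      _ = 1 := hP1
  have hinv : ((Q + N)⁻¹ + M)⁻¹ = Q + S := inv_eq_right_inv hkey
  have heq : ((Q + N)⁻¹ + M)⁻¹ - Q = S := by rw [hinv]; abel
  refine ⟨hA.isUnit, heq, heq ▸ hS, ?_⟩
  rw [heq]
  -- N - S = S * (M + M * N * M) * S, which is PSD
  have hfact : N - S = S * (M + M * N * M) * S := by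
    have : N * M * S = S * ((N⁻¹ + M) * (N * (M * S))) := by
      rw [← Matrix.mul_assoc, ← Matrix.mul_assoc, hS2, Matrix.one_mul,
        Matrix.mul_assoc]
    rw [← hNMS, this]
    have e : (N⁻¹ + M) * (N * (M * S)) = (M + M * N * M) * S := by
      calc (N⁻¹ + M) * (N * (M * S))
          = (N⁻¹ * N) * (M * S) + M * N * (M * S) := by noncomm_ring
        _ = (M + M * N * M) * S := by rw [hN2]; noncomm_ring
    rw [e, ← Matrix.mul_assoc]
  rw [hfact]
  have hMNM : (M * N * M).PosSemidef := by
    have := hN.posSemidef.conjTranspose_mul_mul_same M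
    simpa [hMt] using this
  have hsum : (M + M * N * M).PosSemidef := hM.add hMNM
  have := hsum.mul_mul_conjTranspose_same S
  simpa [hSt] using this
end

section
/- Let Q and M be n×n real symmetric positive semidefinite matrices, let N be an n×n real symmetric positive definite matrix, suppose Q·M = 0, and set Ñ := ((Q+N)⁻¹ + M)⁻¹ − Q. Then det(Q + Ñ)·det(N) = det(Q + N)·det(Ñ), i.e., det(Q+Ñ)/det(Ñ) = det(Q+N)/det(N). -/
open Matrix

/-- Let `Q, M` be real symmetric PSD, `N` real symmetric positive
definite, `Q·M = 0`, and `Ñ := ((Q+N)⁻¹ + M)⁻¹ − Q`. Then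
`det(Q+Ñ)·det N = det(Q+N)·det Ñ`. -/
theorem stmt_4 {n : ℕ} (Q M N Ntil : Matrix (Fin n) (Fin n) ℝ)
    (hQ : Q.PosSemidef) (hM : M.PosSemidef) (hN : N.PosDef)
    (hQM : Q * M = 0)
    (hNtil : Ntil = ((Q + N)⁻¹ + M)⁻¹ - Q) :
    (Q + Ntil).det * N.det = (Q + N).det * Ntil.det := by
  have hA : (Q + N).PosDef := Matrix.PosDef.posSemidef_add hQ hN
  have hAdet : (Q + N).det ≠ 0 := hA.det_pos.ne'
  have hAinv : (Q + N)⁻¹.PosDef := hA.inv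
  have hB : ((Q + N)⁻¹ + M).PosDef := hAinv.add_posSemidef hM
  have hBdet : ((Q + N)⁻¹ + M).det ≠ 0 := hB.det_pos.ne'
  have hMQ : M * Q = 0 := by
    have h := congrArg conjTranspose hQM
    rw [conjTranspose_mul, hM.isHermitian.eq, hQ.isHermitian.eq, conjTranspose_zero] at h
    exact h
  have hQN : Q + Ntil = ((Q + N)⁻¹ + M)⁻¹ := by rw [hNtil]; abel
  have hNtil' : Ntil = ((Q + N)⁻¹ + M)⁻¹ * ((Q + N)⁻¹ * N) := by
    have h1 : ((Q + N)⁻¹ + M)⁻¹ * ((Q + N)⁻¹ + M) = 1 :=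
      nonsing_inv_mul _ (isUnit_iff_ne_zero.2 hBdet)
    have h2 : (Q + N)⁻¹ * (Q + N) = 1 :=
      nonsing_inv_mul _ (isUnit_iff_ne_zero.2 hAdet)
    have key : (Q + N)⁻¹ * N = 1 - ((Q + N)⁻¹ + M) * Q := by
      rw [add_mul, hMQ, add_zero]
      have h3 : (Q + N)⁻¹ * N = (Q + N)⁻¹ * (Q + N) - (Q + N)⁻¹ * Q := by
        rw [← mul_sub]; congr 1; abel
      rw [h3, h2]
    rw [key, mul_sub, mul_one, ← mul_assoc, h1, one_mul, hNtil]
  rw [hQN, hNtil', det_mul, det_mul, det_nonsing_inv, det_nonsing_inv]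
  simp only [Ring.inverse_eq_inv']
  rw [show (Q + N).det * (((Q + N)⁻¹ + M).det⁻¹ * ((Q + N).det⁻¹ * N.det))
      = ((Q + N).det * (Q + N).det⁻¹) * (((Q + N)⁻¹ + M).det⁻¹ * N.det) from by ring,
    mul_inv_cancel₀ hAdet, one_mul]
end

section
/- Let Q and M be n×n real symmetric positive semidefinite matrices, let N and Ñ be n×n real symmetric positive definite matrices, and let S be an n×n real symmetric matrix. Suppose (Q+Ñ)⁻¹ = (Q+N)⁻¹ + M and (S − Q)·M = 0 (the zero matrix). Then det(S + Ñ)·det(Q + N) = det(S + N)·det(Q + Ñ). -/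
open Matrix

/-!
Writing `S + N = (S - Q) + (Q + N)` gives `(S + N)(Q + N)⁻¹ = (S - Q)(Q + N)⁻¹ + 1`, and likewise
for `Ñ`. Since `(Q + Ñ)⁻¹` and `(Q + N)⁻¹` differ by `M`, which `S - Q` annihilates, the two
products `(S + Ñ)(Q + Ñ)⁻¹` and `(S + N)(Q + N)⁻¹` coincide; taking determinants gives the identity.
-/

namespace Matrix

variable {ι R K : Type*} [Fintype ι] [DecidableEq ι]

theorem add_mul_nonsing_inv_self [CommRing R] (A B : Matrix ι ι R) (hB : IsUnit B.det) :
    (A + B) * B⁻¹ = A * B⁻¹ + 1 := by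
  rw [add_mul, mul_nonsing_inv B hB]

theorem add_mul_nonsing_inv_eq_of_inv_eq_add [CommRing R] {Q N Ñ S M : Matrix ι ι R}
    (hN : IsUnit (Q + N).det) (hÑ : IsUnit (Q + Ñ).det)
    (hrel : (Q + Ñ)⁻¹ = (Q + N)⁻¹ + M) (hSM : (S - Q) * M = 0) :
    (S + Ñ) * (Q + Ñ)⁻¹ = (S + N) * (Q + N)⁻¹ := by
  have hSÑ : S + Ñ = (S - Q) + (Q + Ñ) := by abel
  have hSN : S + N = (S - Q) + (Q + N) := by abel
  rw [hSÑ, hSN, add_mul_nonsing_inv_self _ _ hÑ, add_mul_nonsing_inv_self _ _ hN, hrel, mul_add,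
    hSM, add_zero]

theorem det_mul_det_eq_of_mul_nonsing_inv_eq [Field K] {A B C D : Matrix ι ι K}
    (hB : B.det ≠ 0) (hD : D.det ≠ 0) (h : A * B⁻¹ = C * D⁻¹) :
    A.det * D.det = C.det * B.det := by
  have hdet := congrArg det h
  rw [det_mul, det_mul, det_nonsing_inv, det_nonsing_inv, Ring.inverse_eq_inv'] at hdet
  field_simp at hdet
  linear_combination hdet

end Matrix

theorem stmt_5_general {n : ℕ} (Q M N Ntil S : Matrix (Fin n) (Fin n) ℝ)
    (hQ : Q.PosSemidef)
    (hN : N.PosDef) (hNtil : Ntil.PosDef)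
    (hrel : (Q + Ntil)⁻¹ = (Q + N)⁻¹ + M)
    (hSM : (S - Q) * M = 0) :
    (S + Ntil).det * (Q + N).det = (S + N).det * (Q + Ntil).det := by
  have hQN : (Q + N).det ≠ 0 := (PosDef.posSemidef_add hQ hN).det_pos.ne'
  have hQNtil : (Q + Ntil).det ≠ 0 := (PosDef.posSemidef_add hQ hNtil).det_pos.ne'
  exact det_mul_det_eq_of_mul_nonsing_inv_eq hQNtil hQN <|
    add_mul_nonsing_inv_eq_of_inv_eq_add hQN.isUnit hQNtil.isUnit hrel hSM

/-- Let `Q, M` be real symmetric PSD, `N, Ñ` real symmetric positive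
definite, and `S` real symmetric. If `(Q+Ñ)⁻¹ = (Q+N)⁻¹ + M` and `(S − Q)·M = 0`,
then `det(S+Ñ)·det(Q+N) = det(S+N)·det(Q+Ñ)`. -/
theorem stmt_5 {n : ℕ} (Q M N Ntil S : Matrix (Fin n) (Fin n) ℝ)
    (hQ : Q.PosSemidef) (hM : M.PosSemidef)
    (hN : N.PosDef) (hNtil : Ntil.PosDef) (hS : S.IsHermitian)
    (hrel : (Q + Ntil)⁻¹ = (Q + N)⁻¹ + M)
    (hSM : (S - Q) * M = 0) :
    (S + Ntil).det * (Q + N).det = (S + N).det * (Q + Ntil).det :=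
  stmt_5_general Q M N Ntil S hQ hN hNtil hrel hSM
end

section
/- Let Q₁, Q₂, M₁, M₂, M₃, M₄ be n×n real symmetric positive semidefinite matrices and let S₁, S₂ be n×n real symmetric matrices with S₂ − S₁ positive definite. Suppose the constraint S₁ ⪯ Q₁ + Q₂ ⪯ S₂ holds, together with the complementary slackness conditions Q₁·M₁ = 0, Q₂·M₂ = 0, (Q₁ + Q₂ − S₁)·M₃ = 0, (S₂ − Q₁ − Q₂)·M₄ = 0, and the stationarity condition M₄ = M₂ + M₃. Then (S₂ − Q₁)·M₂ = 0 (the zero matrix). -/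
/-!
Put `A := S₂ - Q₁ - Q₂ ⪰ 0`. Stationarity and complementary slackness give
`A M₂ + A M₃ = A M₄ = 0`. For positive semidefinite `A = Xᴴ X` and `B = Yᴴ Y` one has
`tr (A B) = ‖X Yᴴ‖²`, so `tr (A B) ≥ 0` with equality only if `A B = 0`. The two nonnegative
traces `tr (A M₂)` and `tr (A M₃)` sum to zero, hence `A M₂ = 0`, and `Q₂ M₂ = 0` then gives the
claim.
-/

open Matrix

namespace Matrix

variable {𝕜 n : Type*} [RCLike 𝕜] [Fintype n] {A B C : Matrix n n 𝕜}

theorem trace_conjTranspose_mul_self_mul_conjTranspose_mul_self (X Y : Matrix n n 𝕜) :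
    (Xᴴ * X * (Yᴴ * Y)).trace = (X * Yᴴ * (X * Yᴴ)ᴴ).trace := by
  rw [conjTranspose_mul, conjTranspose_conjTranspose, Matrix.mul_assoc, trace_mul_comm]
  simp only [Matrix.mul_assoc]

namespace PosSemidef

open scoped ComplexOrder MatrixOrder

theorem exists_eq_conjTranspose_mul_self (hA : A.PosSemidef) : ∃ X, A = Xᴴ * X := by
  classical
  exact CStarAlgebra.nonneg_iff_eq_star_mul_self.mp hA.nonneg

theorem trace_mul_nonneg (hA : A.PosSemidef) (hB : B.PosSemidef) : 0 ≤ (A * B).trace := by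
  obtain ⟨X, rfl⟩ := hA.exists_eq_conjTranspose_mul_self
  obtain ⟨Y, rfl⟩ := hB.exists_eq_conjTranspose_mul_self
  rw [trace_conjTranspose_mul_self_mul_conjTranspose_mul_self]
  exact (posSemidef_self_mul_conjTranspose _).trace_nonneg

theorem trace_mul_eq_zero_iff (hA : A.PosSemidef) (hB : B.PosSemidef) :
    (A * B).trace = 0 ↔ A * B = 0 := by
  refine ⟨fun h ↦ ?_, fun h ↦ by rw [h, trace_zero]⟩
  obtain ⟨X, rfl⟩ := hA.exists_eq_conjTranspose_mul_self
  obtain ⟨Y, rfl⟩ := hB.exists_eq_conjTranspose_mul_self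
  rw [trace_conjTranspose_mul_self_mul_conjTranspose_mul_self,
    trace_mul_conjTranspose_self_eq_zero_iff] at h
  rw [show Xᴴ * X * (Yᴴ * Y) = Xᴴ * (X * Yᴴ) * Y by simp only [Matrix.mul_assoc], h,
    Matrix.mul_zero, Matrix.zero_mul]

theorem mul_eq_zero_of_mul_add_eq_zero (hA : A.PosSemidef) (hB : B.PosSemidef)
    (hC : C.PosSemidef) (h : A * (B + C) = 0) : A * B = 0 := by
  have htrace : (A * B).trace + (A * C).trace = 0 := by
    rw [← trace_add, ← Matrix.mul_add, h, trace_zero]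
  exact (hA.trace_mul_eq_zero_iff hB).mp
    ((add_eq_zero_iff_of_nonneg (hA.trace_mul_nonneg hB) (hA.trace_mul_nonneg hC)).mp htrace).1

end PosSemidef

end Matrix

theorem stmt_6_general {n : ℕ} (Q₁ Q₂ M₂ M₃ M₄ S₂ : Matrix (Fin n) (Fin n) ℝ)
    (hM₂ : M₂.PosSemidef) (hM₃ : M₃.PosSemidef)
    (hup : (S₂ - (Q₁ + Q₂)).PosSemidef)
    (hcs₂ : Q₂ * M₂ = 0) (hcs₄ : (S₂ - Q₁ - Q₂) * M₄ = 0)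
    (hstat : M₄ = M₂ + M₃) :
    (S₂ - Q₁) * M₂ = 0 := by
  have hslack : (S₂ - Q₁ - Q₂).PosSemidef := by rwa [sub_sub]
  have hslack_M₂ : (S₂ - Q₁ - Q₂) * M₂ = 0 :=
    hslack.mul_eq_zero_of_mul_add_eq_zero hM₂ hM₃ (hstat ▸ hcs₄)
  calc (S₂ - Q₁) * M₂ = (S₂ - Q₁ - Q₂) * M₂ + Q₂ * M₂ := by rw [← add_mul, sub_add_cancel]
    _ = 0 := by rw [hslack_M₂, hcs₂, add_zero]

/-- Lemma 3 of the paper. Under the double-sided correlation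
constraint `S₁ ⪯ Q₁ + Q₂ ⪯ S₂` with `S₂ − S₁ ≻ 0`, the KKT complementary slackness
conditions `Q₁M₁ = 0`, `Q₂M₂ = 0`, `(Q₁+Q₂−S₁)M₃ = 0`, `(S₂−Q₁−Q₂)M₄ = 0` and the
stationarity condition `M₄ = M₂ + M₃` imply `(S₂ − Q₁)·M₂ = 0`. -/
theorem stmt_6 {n : ℕ} (Q₁ Q₂ M₁ M₂ M₃ M₄ S₁ S₂ : Matrix (Fin n) (Fin n) ℝ)
    (hQ₁ : Q₁.PosSemidef) (hQ₂ : Q₂.PosSemidef)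
    (hM₁ : M₁.PosSemidef) (hM₂ : M₂.PosSemidef)
    (hM₃ : M₃.PosSemidef) (hM₄ : M₄.PosSemidef)
    (hS₁ : S₁.IsHermitian) (hS₂ : S₂.IsHermitian)
    (hSS : (S₂ - S₁).PosDef)
    (hlow : (Q₁ + Q₂ - S₁).PosSemidef) (hup : (S₂ - (Q₁ + Q₂)).PosSemidef)
    (hcs₁ : Q₁ * M₁ = 0) (hcs₂ : Q₂ * M₂ = 0)
    (hcs₃ : (Q₁ + Q₂ - S₁) * M₃ = 0) (hcs₄ : (S₂ - Q₁ - Q₂) * M₄ = 0)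
    (hstat : M₄ = M₂ + M₃) :
    (S₂ - Q₁) * M₂ = 0 :=
  stmt_6_general Q₁ Q₂ M₂ M₃ M₄ S₂ hM₂ hM₃ hup hcs₂ hcs₄ hstat
end

section
/- Let Q, M₁, M₃, M₄ be n×n real symmetric positive semidefinite matrices, let N₁, N₂ be n×n real symmetric positive definite matrices, and let S₂ be an n×n real symmetric matrix. Suppose (S₂ − Q)·M₄ = 0, the stationarity condition (Q+N₂)⁻¹ − (Q+N₁)⁻¹ − M₁ − M₃ + M₄ = 0 holds, and S₂ − Q is positive definite. Then N₂ ⪯ N₁. -/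
open Matrix

namespace Matrix.PosDef

variable {n K : Type*} [Fintype n] [DecidableEq n]
  [Field K] [PartialOrder K] [StarRing K] [StarOrderedRing K]

/-- Both Schur complements of `fromBlocks B 1 1 A⁻¹` are positive semidefinite at once. -/
theorem posSemidef_inv_sub_inv {A B : Matrix n n K} (hA : A.PosDef) (hB : B.PosDef)
    (h : (B - A).PosSemidef) : (A⁻¹ - B⁻¹).PosSemidef := by
  have := hA.isUnit.invertible
  have := hB.isUnit.invertible
  have := hA.inv.isUnit.invertible
  have hblocks : (fromBlocks B 1 (1 : Matrix n n K)ᴴ A⁻¹).PosSemidef := by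
    rw [fromBlocks₂₂ _ _ hA.inv]
    simpa [inv_inv_of_invertible] using h
  simpa using (fromBlocks₁₁ 1 A⁻¹ hB).mp hblocks

theorem posSemidef_inv_sub_inv_iff {A B : Matrix n n K} (hA : A.PosDef) (hB : B.PosDef) :
    (A⁻¹ - B⁻¹).PosSemidef ↔ (B - A).PosSemidef := by
  refine ⟨fun h ↦ ?_, posSemidef_inv_sub_inv hA hB⟩
  have := hA.isUnit.invertible
  have := hB.isUnit.invertible
  simpa only [inv_inv_of_invertible] using posSemidef_inv_sub_inv hB.inv hA.inv h

end Matrix.PosDef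

theorem stmt_7_general {n : ℕ} (Q M₁ M₃ M₄ N₁ N₂ S₂ : Matrix (Fin n) (Fin n) ℝ)
    (hQ : Q.PosSemidef)
    (hM₁ : M₁.PosSemidef) (hM₃ : M₃.PosSemidef)
    (hN₁ : N₁.PosDef) (hN₂ : N₂.PosDef)
    (hcs : (S₂ - Q) * M₄ = 0)
    (hstat : (Q + N₂)⁻¹ - (Q + N₁)⁻¹ - M₁ - M₃ + M₄ = 0)
    (hstrict : (S₂ - Q).PosDef) :
    (N₁ - N₂).PosSemidef := by
  have hM₄ : M₄ = 0 := hstrict.isUnit.mul_right_eq_zero.mp hcs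
  have hinv : (Q + N₂)⁻¹ - (Q + N₁)⁻¹ = M₁ + M₃ := by
    rw [hM₄] at hstat
    linear_combination (norm := abel_nf) hstat
  have hgap : ((Q + N₂)⁻¹ - (Q + N₁)⁻¹).PosSemidef := hinv ▸ hM₁.add hM₃
  rw [(hN₂.posSemidef_add hQ).posSemidef_inv_sub_inv_iff (hN₁.posSemidef_add hQ)] at hgap
  simpa using hgap

/-- first case in the proof of Lemma 4 of the paper. If
`(S₂ − Q)·M₄ = 0`, the stationarity condition
`(Q+N₂)⁻¹ − (Q+N₁)⁻¹ − M₁ − M₃ + M₄ = 0` holds, and `S₂ − Q ≻ 0`, then `N₂ ⪯ N₁`. -/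
theorem stmt_7 {n : ℕ} (Q M₁ M₃ M₄ N₁ N₂ S₂ : Matrix (Fin n) (Fin n) ℝ)
    (hQ : Q.PosSemidef)
    (hM₁ : M₁.PosSemidef) (hM₃ : M₃.PosSemidef) (hM₄ : M₄.PosSemidef)
    (hN₁ : N₁.PosDef) (hN₂ : N₂.PosDef) (hS₂ : S₂.IsHermitian)
    (hcs : (S₂ - Q) * M₄ = 0)
    (hstat : (Q + N₂)⁻¹ - (Q + N₁)⁻¹ - M₁ - M₃ + M₄ = 0)
    (hstrict : (S₂ - Q).PosDef) :
    (N₁ - N₂).PosSemidef :=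
  stmt_7_general Q M₁ M₃ M₄ N₁ N₂ S₂ hQ hM₁ hM₃ hN₁ hN₂ hcs hstat hstrict
end

section
/- Let Q₁, M₁, M₂ be n×n real symmetric positive semidefinite matrices, N₁, N₂ be n×n real symmetric positive definite matrices, and S₂ be an n×n real symmetric matrix with Q₁ ⪯ S₂. Suppose Q₁·M₁ = 0, (S₂ − Q₁)·M₂ = 0, and (Q₁+N₁)⁻¹ + M₁ = (Q₁+N₂)⁻¹ + M₂. Define Ñ := ((Q₁+N₁)⁻¹ + M₁)⁻¹ − Q₁. Then Ñ is symmetric positive definite, Ñ ⪯ N₁, Ñ ⪯ N₂, and (1/2)·log(det(S₂+Ñ)/det(Ñ)) − (1/2)·log(det(S₂+N₂)/det(N₂)) = (1/2)·log(det(Q₁+N₁)/det(N₁)) − (1/2)·log(det(Q₁+N₂)/det(N₂)). -/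
/-!
Write `A := (Q₁ + N₁)⁻¹ + M₁ = (Q₁ + N₂)⁻¹ + M₂`, so that `Ñ = A⁻¹ - Q₁`. The orthogonality
conditions `Q₁ M₁ = 0` and `(S₂ - Q₁) M₂ = 0` give the factorisations `Ñ A (Q₁ + N₁) = N₁` and
`(S₂ + Ñ) A (Q₁ + N₂) = S₂ + N₂`, so `det A` cancels from the difference of the two rates.
The positivity claims come from conjugating by `A`: `A Ñ A = (Q₁ + N₁)⁻¹ N₁ (Q₁ + N₁)⁻¹ + M₁`
and `A (N - Ñ) A = M + M (Q₁ + N) M` for `(N, M) = (N₁, M₁), (N₂, M₂)`.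
-/

open Matrix
open scoped ComplexOrder

namespace Matrix

variable {n R 𝕜 : Type*} [Fintype n] [DecidableEq n]

theorem add_inv_mul_mul_eq [CommRing R] {X P M : Matrix n n R} (hP : IsUnit P.det)
    (hPM : IsUnit (P⁻¹ + M).det) (hXM : X * M = 0) :
    (X + (P⁻¹ + M)⁻¹) * (P⁻¹ + M) * P = X + P := by
  rw [add_mul, nonsing_inv_mul _ hPM, mul_add, hXM, add_zero, add_mul, one_mul,
    Matrix.mul_assoc, nonsing_inv_mul _ hP, Matrix.mul_one]

theorem det_add_inv_mul_mul [CommRing R] {X P M : Matrix n n R} (hP : IsUnit P.det)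
    (hPM : IsUnit (P⁻¹ + M).det) (hXM : X * M = 0) :
    (X + (P⁻¹ + M)⁻¹).det * (P⁻¹ + M).det * P.det = (X + P).det := by
  rw [← det_mul, ← det_mul, add_inv_mul_mul_eq hP hPM hXM]

variable [RCLike 𝕜]

theorem PosDef.posSemidef_sub_inv_inv_add {P M : Matrix n n 𝕜} (hP : P.PosDef)
    (hM : M.PosSemidef) : (P - (P⁻¹ + M)⁻¹).PosSemidef := by
  have hA : (P⁻¹ + M).PosDef := hP.inv.add_posSemidef hM
  have hAu : IsUnit (P⁻¹ + M).det := (isUnit_iff_isUnit_det _).mp hA.isUnit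
  have hPu : IsUnit P.det := (isUnit_iff_isUnit_det _).mp hP.isUnit
  have hconj : star (P⁻¹ + M) * (P - (P⁻¹ + M)⁻¹) * (P⁻¹ + M) = M + M * P * M := by
    rw [star_eq_conjTranspose, hA.isHermitian.eq, mul_sub, sub_mul,
      mul_nonsing_inv _ hAu, one_mul, add_mul, nonsing_inv_mul _ hPu, add_mul, one_mul,
      mul_add, Matrix.mul_assoc M P, mul_nonsing_inv _ hPu, Matrix.mul_one]
    abel
  rw [← hA.isUnit.posSemidef_star_left_conjugate_iff, hconj]
  simpa only [hM.isHermitian.eq] using hM.add (hP.posSemidef.conjTranspose_mul_mul_same M)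

theorem PosDef.inv_inv_add_sub {Q N M : Matrix n n 𝕜} (hQ : Q.PosSemidef) (hN : N.PosDef)
    (hM : M.PosSemidef) (hQM : Q * M = 0) : (((Q + N)⁻¹ + M)⁻¹ - Q).PosDef := by
  have hP : (Q + N).PosDef := PosDef.posSemidef_add hQ hN
  set P := Q + N
  have hA : (P⁻¹ + M).PosDef := hP.inv.add_posSemidef hM
  have hAu : IsUnit (P⁻¹ + M).det := (isUnit_iff_isUnit_det _).mp hA.isUnit
  have hPu : IsUnit P.det := (isUnit_iff_isUnit_det _).mp hP.isUnit
  have hMQ : M * Q = 0 := by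
    simpa [hQ.isHermitian.eq, hM.isHermitian.eq] using congrArg (·ᴴ) hQM
  have hconj : star (P⁻¹ + M) * ((P⁻¹ + M)⁻¹ - Q) * (P⁻¹ + M)
      = star P⁻¹ * N * P⁻¹ + M := by
    have hNPQ : N = P - Q := (add_sub_cancel_left Q N).symm
    rw [star_eq_conjTranspose, hA.isHermitian.eq, star_eq_conjTranspose, hP.inv.isHermitian.eq,
      mul_sub, mul_nonsing_inv _ hAu, sub_mul, one_mul, add_mul, hMQ, add_zero, Matrix.mul_assoc,
      mul_add, hQM, add_zero, hNPQ, mul_sub, sub_mul, nonsing_inv_mul _ hPu, one_mul,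
      Matrix.mul_assoc]
    abel
  rw [← hA.isUnit.posDef_star_left_conjugate_iff, hconj]
  have hPinv : IsUnit P⁻¹ := isUnit_nonsing_inv_iff.mpr hP.isUnit
  exact (hPinv.posDef_star_left_conjugate_iff.mpr hN).add_posSemidef hM

end Matrix

theorem stmt_9_general {n : ℕ} (Q₁ M₁ M₂ N₁ N₂ S₂ Ntil : Matrix (Fin n) (Fin n) ℝ)
    (hQ₁ : Q₁.PosSemidef) (hM₁ : M₁.PosSemidef) (hM₂ : M₂.PosSemidef)
    (hN₁ : N₁.PosDef) (hN₂ : N₂.PosDef)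
    (hord : (S₂ - Q₁).PosSemidef)
    (hcs₁ : Q₁ * M₁ = 0) (hcs₂ : (S₂ - Q₁) * M₂ = 0)
    (hrel : (Q₁ + N₁)⁻¹ + M₁ = (Q₁ + N₂)⁻¹ + M₂)
    (hNtil : Ntil = ((Q₁ + N₁)⁻¹ + M₁)⁻¹ - Q₁) :
    Ntil.PosDef ∧ (N₁ - Ntil).PosSemidef ∧ (N₂ - Ntil).PosSemidef ∧
    (1/2) * Real.log ((S₂ + Ntil).det / Ntil.det)
      - (1/2) * Real.log ((S₂ + N₂).det / N₂.det)
    = (1/2) * Real.log ((Q₁ + N₁).det / N₁.det)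
      - (1/2) * Real.log ((Q₁ + N₂).det / N₂.det) := by
  have hP₁ : (Q₁ + N₁).PosDef := PosDef.posSemidef_add hQ₁ hN₁
  have hP₂ : (Q₁ + N₂).PosDef := PosDef.posSemidef_add hQ₁ hN₂
  have hA : ((Q₁ + N₁)⁻¹ + M₁).PosDef := hP₁.inv.add_posSemidef hM₁
  have hNtil_pd : Ntil.PosDef := hNtil ▸ PosDef.inv_inv_add_sub hQ₁ hN₁ hM₁ hcs₁
  have hsub (N : Matrix (Fin n) (Fin n) ℝ) : N - Ntil = Q₁ + N - ((Q₁ + N₁)⁻¹ + M₁)⁻¹ := by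
    rw [hNtil]; abel
  have hdet₁ : Ntil.det * ((Q₁ + N₁)⁻¹ + M₁).det * (Q₁ + N₁).det = N₁.det := by
    have := det_add_inv_mul_mul hP₁.det_pos.ne'.isUnit hA.det_pos.ne'.isUnit
      (X := -Q₁) (by rw [neg_mul, hcs₁, neg_zero])
    rwa [neg_add_cancel_left, neg_add_eq_sub, ← hNtil] at this
  have hdet₂ : (S₂ + Ntil).det * ((Q₁ + N₁)⁻¹ + M₁).det * (Q₁ + N₂).det = (S₂ + N₂).det := by
    have := det_add_inv_mul_mul hP₂.det_pos.ne'.isUnit (hrel ▸ hA.det_pos.ne'.isUnit) hcs₂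
    rwa [show S₂ - Q₁ + (Q₁ + N₂) = S₂ + N₂ by abel, ← hrel,
      show S₂ - Q₁ + ((Q₁ + N₁)⁻¹ + M₁)⁻¹ = S₂ + Ntil by rw [hNtil]; abel] at this
  refine ⟨hNtil_pd, ?_, ?_, ?_⟩
  · rw [hsub]
    exact hP₁.posSemidef_sub_inv_inv_add hM₁
  · rw [hsub, hrel]
    exact hP₂.posSemidef_sub_inv_inv_add hM₂
  · have hSN₂ : (S₂ + N₂).PosDef := by
      simpa only [show S₂ - Q₁ + (Q₁ + N₂) = S₂ + N₂ by abel] using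
        PosDef.posSemidef_add hord hP₂
    have hratio : (S₂ + Ntil).det / Ntil.det
        = (S₂ + N₂).det / N₂.det * ((Q₁ + N₁).det / N₁.det) / ((Q₁ + N₂).det / N₂.det) := by
      rw [← hdet₁, ← hdet₂]
      field_simp [hNtil_pd.det_pos.ne', hA.det_pos.ne', hP₁.det_pos.ne', hP₂.det_pos.ne',
        hN₂.det_pos.ne']
    rw [hratio, Real.log_div, Real.log_mul]
    · ring
    all_goals positivity [hSN₂.det_pos, hN₁.det_pos, hN₂.det_pos, hP₁.det_pos, hP₂.det_pos]

/-- core of the converse proof for Gaussian coding with fixed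
mean, Eqs. (64)–(69) of the paper. Under `Q₁M₁ = 0`, `(S₂−Q₁)M₂ = 0` and the
enhanced-channel relation `(Q₁+N₁)⁻¹ + M₁ = (Q₁+N₂)⁻¹ + M₂`, the matrix
`Ñ := ((Q₁+N₁)⁻¹ + M₁)⁻¹ − Q₁` is symmetric positive definite, satisfies
`Ñ ⪯ N₁`, `Ñ ⪯ N₂`, and the secrecy rates are preserved:
`½ log(det(S₂+Ñ)/det Ñ) − ½ log(det(S₂+N₂)/det N₂)
  = ½ log(det(Q₁+N₁)/det N₁) − ½ log(det(Q₁+N₂)/det N₂)`. -/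
theorem stmt_9 {n : ℕ} (Q₁ M₁ M₂ N₁ N₂ S₂ Ntil : Matrix (Fin n) (Fin n) ℝ)
    (hQ₁ : Q₁.PosSemidef) (hM₁ : M₁.PosSemidef) (hM₂ : M₂.PosSemidef)
    (hN₁ : N₁.PosDef) (hN₂ : N₂.PosDef)
    (hS₂ : S₂.IsHermitian) (hord : (S₂ - Q₁).PosSemidef)
    (hcs₁ : Q₁ * M₁ = 0) (hcs₂ : (S₂ - Q₁) * M₂ = 0)
    (hrel : (Q₁ + N₁)⁻¹ + M₁ = (Q₁ + N₂)⁻¹ + M₂)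
    (hNtil : Ntil = ((Q₁ + N₁)⁻¹ + M₁)⁻¹ - Q₁) :
    Ntil.PosDef ∧ (N₁ - Ntil).PosSemidef ∧ (N₂ - Ntil).PosSemidef ∧
    (1/2) * Real.log ((S₂ + Ntil).det / Ntil.det)
      - (1/2) * Real.log ((S₂ + N₂).det / N₂.det)
    = (1/2) * Real.log ((Q₁ + N₁).det / N₁.det)
      - (1/2) * Real.log ((Q₁ + N₂).det / N₂.det) :=
  stmt_9_general Q₁ M₁ M₂ N₁ N₂ S₂ Ntil hQ₁ hM₁ hM₂ hN₁ hN₂ hord hcs₁ hcs₂ hrel hNtil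
end

section
/- Let Q₁, Q₂, M₁, M₂ be n×n real symmetric positive semidefinite matrices and N₁, N₂ be n×n real symmetric positive definite matrices. Suppose Q₁·M₁ = 0, Q₂·M₂ = 0, and (Q₂+N₁)⁻¹ + M₁ = (Q₂+N₂)⁻¹ + M₂. Define Ñ := ((Q₂+N₂)⁻¹ + M₂)⁻¹ − Q₂ and S₂ := Q₁ + Q₂. Then Ñ is symmetric positive definite, Ñ ⪯ N₁, Ñ ⪯ N₂, and (1/2)·log(det(S₂+Ñ)/det(Ñ)) − (1/2)·log(det(S₂+N₂)/det(N₂)) = (1/2)·log(det(Q₁+Q₂+N₁)/det(Q₂+N₁)) − (1/2)·log(det(Q₁+Q₂+N₂)/det(Q₂+N₂)). -/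
open Matrix

/-- core of the converse proof for Gaussian coding with Gaussian
artificial noise, Eqs. (87)–(93) of the paper. Under `Q₁M₁ = 0`, `Q₂M₂ = 0` and
the enhanced-channel relation `(Q₂+N₁)⁻¹ + M₁ = (Q₂+N₂)⁻¹ + M₂`, the matrix
`Ñ := ((Q₂+N₂)⁻¹ + M₂)⁻¹ − Q₂` is symmetric positive definite, satisfies
`Ñ ⪯ N₁`, `Ñ ⪯ N₂`, and with `S₂ := Q₁ + Q₂`,
`½ log(det(S₂+Ñ)/det Ñ) − ½ log(det(S₂+N₂)/det N₂)
 = ½ log(det(Q₁+Q₂+N₁)/det(Q₂+N₁)) − ½ log(det(Q₁+Q₂+N₂)/det(Q₂+N₂))`. -/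
theorem stmt_10 {n : ℕ} (Q₁ Q₂ M₁ M₂ N₁ N₂ Ntil S₂ : Matrix (Fin n) (Fin n) ℝ)
    (hQ₁ : Q₁.PosSemidef) (hQ₂ : Q₂.PosSemidef)
    (hM₁ : M₁.PosSemidef) (hM₂ : M₂.PosSemidef)
    (hN₁ : N₁.PosDef) (hN₂ : N₂.PosDef)
    (hcs₁ : Q₁ * M₁ = 0) (hcs₂ : Q₂ * M₂ = 0)
    (hrel : (Q₂ + N₁)⁻¹ + M₁ = (Q₂ + N₂)⁻¹ + M₂)
    (hNtil : Ntil = ((Q₂ + N₂)⁻¹ + M₂)⁻¹ - Q₂)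
    (hS₂ : S₂ = Q₁ + Q₂) :
    Ntil.PosDef ∧ (N₁ - Ntil).PosSemidef ∧ (N₂ - Ntil).PosSemidef ∧
    (1/2) * Real.log ((S₂ + Ntil).det / Ntil.det)
      - (1/2) * Real.log ((S₂ + N₂).det / N₂.det)
    = (1/2) * Real.log ((Q₁ + Q₂ + N₁).det / (Q₂ + N₁).det)
      - (1/2) * Real.log ((Q₁ + Q₂ + N₂).det / (Q₂ + N₂).det) := by
  set P₁ := Q₂ + N₁ with hP₁def
  set P₂ := Q₂ + N₂ with hP₂def
  set B := P₂⁻¹ + M₂ with hBdef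
  have hP₁ : P₁.PosDef := PosDef.posSemidef_add hQ₂ hN₁
  have hP₂ : P₂.PosDef := PosDef.posSemidef_add hQ₂ hN₂
  have hB : B.PosDef := hP₂.inv.add_posSemidef hM₂
  have hrel' : B = P₁⁻¹ + M₁ := hrel.symm
  -- basic invertibility
  have hP₁i : P₁ * P₁⁻¹ = 1 := P₁.mul_nonsing_inv hP₁.det_pos.ne'.isUnit
  have hP₁i' : P₁⁻¹ * P₁ = 1 := P₁.nonsing_inv_mul hP₁.det_pos.ne'.isUnit
  have hP₂i : P₂ * P₂⁻¹ = 1 := P₂.mul_nonsing_inv hP₂.det_pos.ne'.isUnit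
  have hP₂i' : P₂⁻¹ * P₂ = 1 := P₂.nonsing_inv_mul hP₂.det_pos.ne'.isUnit
  have hBi : B * B⁻¹ = 1 := B.mul_nonsing_inv hB.det_pos.ne'.isUnit
  have hBi' : B⁻¹ * B = 1 := B.nonsing_inv_mul hB.det_pos.ne'.isUnit
  have hN₂i : N₂ * N₂⁻¹ = 1 := N₂.mul_nonsing_inv hN₂.det_pos.ne'.isUnit
  -- transposed orthogonality
  have hM₂Q₂ : M₂ * Q₂ = 0 := by
    have h1 : M₂ᵀ = M₂ := by simpa using hM₂.isHermitian.eq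
    have h2 : Q₂ᵀ = Q₂ := by simpa using hQ₂.isHermitian.eq
    have := congrArg transpose hcs₂
    rw [transpose_mul, h1, h2] at this
    simpa using this
  have hM₁Q₁ : M₁ * Q₁ = 0 := by
    have h1 : M₁ᵀ = M₁ := by simpa using hM₁.isHermitian.eq
    have h2 : Q₁ᵀ = Q₁ := by simpa using hQ₁.isHermitian.eq
    have := congrArg transpose hcs₁
    rw [transpose_mul, h1, h2] at this
    simpa using this
  have hNtil' : Ntil = B⁻¹ - Q₂ := hNtil
  -- B * Ntil = 1 - P₂⁻¹ * Q₂
  have hBN : B * Ntil = 1 - P₂⁻¹ * Q₂ := by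
    rw [hNtil', mul_sub, hBi, hBdef, add_mul, hM₂Q₂, add_zero]
  -- Ntil⁻¹ = N₂⁻¹ + M₂
  have hC : (N₂⁻¹ + M₂).PosDef := hN₂.inv.add_posSemidef hM₂
  have key : B * (Ntil * (N₂⁻¹ + M₂)) = B := by
    rw [← mul_assoc, hBN, sub_mul, one_mul]
    have h1 : P₂⁻¹ * Q₂ * (N₂⁻¹ + M₂) = P₂⁻¹ * Q₂ * N₂⁻¹ := by
      rw [mul_add, mul_assoc P₂⁻¹ Q₂ M₂, hcs₂, mul_zero, add_zero]
    have h2 : P₂⁻¹ * Q₂ * N₂⁻¹ = N₂⁻¹ - P₂⁻¹ := by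
      have hQ : Q₂ = P₂ - N₂ := by rw [hP₂def]; abel
      rw [hQ, mul_sub, sub_mul, hP₂i', one_mul, mul_assoc, hN₂i, mul_one]
    rw [h1, h2, hBdef]
    abel
  have hNtilC : Ntil * (N₂⁻¹ + M₂) = 1 := by
    have := congrArg (fun X => B⁻¹ * X) key
    simpa [← mul_assoc, hBi', one_mul] using this
  have hNtilInv : (N₂⁻¹ + M₂)⁻¹ = Ntil :=
    inv_eq_right_inv (mul_eq_one_comm.mp hNtilC)
  have hNtilPD : Ntil.PosDef := by rw [← hNtilInv]; exact hC.inv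
  -- generic PSD lemma: if B = P⁻¹ + M with P posdef, M psd, then P - B⁻¹ psd
  have psd_aux : ∀ (P M : Matrix (Fin n) (Fin n) ℝ), P.PosDef → M.PosSemidef →
      (P * P⁻¹ = 1) → (B = P⁻¹ + M) → (P - B⁻¹).PosSemidef := by
    intro P M hP hM hPi hBeq
    have hMPM : (M + M * P * M).PosSemidef := by
      have h := hP.posSemidef.conjTranspose_mul_mul_same M
      rw [hM.isHermitian.eq] at h
      exact hM.add h
    have hconj : (B⁻¹ * (M + M * P * M) * B⁻¹).PosSemidef := by
      have h := hMPM.conjTranspose_mul_mul_same B⁻¹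
      rwa [hB.isHermitian.inv.eq] at h
    have hBPB : B * P * B = B + (M + M * P * M) := by
      rw [hBeq]
      have h1 : (P⁻¹ + M) * P = 1 + M * P := by
        rw [add_mul, P.nonsing_inv_mul hP.det_pos.ne'.isUnit]
      rw [h1, add_mul, one_mul, mul_add, mul_assoc M P P⁻¹, hPi, mul_one]
    have h2 : M + M * P * M = B * P * B - B := by rw [hBPB]; abel
    have e1 : B⁻¹ * (B * P * B) * B⁻¹ = P := by
      rw [mul_assoc B P B, ← mul_assoc B⁻¹ B (P * B), hBi', one_mul,
        mul_assoc P B B⁻¹, hBi, mul_one]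
    have e2 : B⁻¹ * B * B⁻¹ = B⁻¹ := by rw [hBi', one_mul]
    have hident : B⁻¹ * (M + M * P * M) * B⁻¹ = P - B⁻¹ := by
      rw [h2, mul_sub, sub_mul, e1, e2]
    rwa [hident] at hconj
  have hpsd₁ : (N₁ - Ntil).PosSemidef := by
    have h := psd_aux P₁ M₁ hP₁ hM₁ hP₁i hrel'
    have e : N₁ - Ntil = P₁ - B⁻¹ := by rw [hNtil', hP₁def]; abel
    rwa [e]
  have hpsd₂ : (N₂ - Ntil).PosSemidef := by
    have h := psd_aux P₂ M₂ hP₂ hM₂ hP₂i rfl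
    have e : N₂ - Ntil = P₂ - B⁻¹ := by rw [hNtil', hP₂def]; abel
    rwa [e]
  refine ⟨hNtilPD, hpsd₁, hpsd₂, ?_⟩
  -- determinant identities
  have hSN : S₂ + Ntil = Q₁ + B⁻¹ := by rw [hS₂, hNtil']; abel
  have d1 : P₁ * (B * (S₂ + Ntil)) = Q₁ + Q₂ + N₁ := by
    rw [hSN, mul_add, hBi, hrel', add_mul P₁⁻¹ M₁ Q₁, hM₁Q₁, add_zero, mul_add,
      ← mul_assoc P₁ P₁⁻¹ Q₁, hP₁i, one_mul, mul_one, hP₁def]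
    abel
  have d2 : Ntil * B * P₂ = N₂ := by
    have hNB : Ntil * B = 1 - Q₂ * P₂⁻¹ := by
      rw [hNtil', sub_mul, hBi', hBdef, mul_add, hcs₂, add_zero]
    rw [hNB, sub_mul, one_mul, mul_assoc, hP₂i', mul_one, hP₂def]
    abel
  -- determinant versions
  have D1 : P₁.det * (B.det * (S₂ + Ntil).det) = (Q₁ + Q₂ + N₁).det := by
    rw [← det_mul, ← det_mul, d1]
  have D2 : Ntil.det * B.det * P₂.det = N₂.det := by
    rw [← det_mul, ← det_mul, d2]
  -- positivity of determinants
  have hSNpd : (S₂ + Ntil).PosDef := by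
    rw [hS₂]; exact PosDef.posSemidef_add (hQ₁.add hQ₂) hNtilPD
  have hA1 : (Q₁ + Q₂ + N₁).PosDef := PosDef.posSemidef_add (hQ₁.add hQ₂) hN₁
  have hA2 : (Q₁ + Q₂ + N₂).PosDef := PosDef.posSemidef_add (hQ₁.add hQ₂) hN₂
  have hSN2 : S₂ + N₂ = Q₁ + Q₂ + N₂ := by rw [hS₂]
  have pa := hSNpd.det_pos
  have pb := hNtilPD.det_pos
  have pβ := hB.det_pos
  have pp₁ := hP₁.det_pos
  have pp₂ := hP₂.det_pos
  have pn₂ := hN₂.det_pos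
  have pc := hA1.det_pos
  have pd := hA2.det_pos
  -- logarithmic bookkeeping
  have L1 : Real.log P₁.det + (Real.log B.det + Real.log (S₂ + Ntil).det)
      = Real.log (Q₁ + Q₂ + N₁).det := by
    rw [← Real.log_mul pβ.ne' pa.ne', ← Real.log_mul pp₁.ne' (mul_pos pβ pa).ne', D1]
  have L2 : Real.log Ntil.det + Real.log B.det + Real.log P₂.det = Real.log N₂.det := by
    rw [← Real.log_mul pb.ne' pβ.ne', ← Real.log_mul (mul_pos pb pβ).ne' pp₂.ne', D2]
  rw [hSN2, Real.log_div pa.ne' pb.ne', Real.log_div pd.ne' pn₂.ne',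
    Real.log_div pc.ne' pp₁.ne', Real.log_div pd.ne' pp₂.ne']
  linarith
end

section
/- Let 0 < α₁ ≤ α₂, let Q₁, Q₂, M₁, M₂ be n×n real symmetric positive semidefinite matrices, and let N₁, N₂ be n×n real symmetric positive definite matrices such that (α₁/2)·(Q₁+N₁)⁻¹ + M₁ = (α₂/2)·(Q₁+N₂)⁻¹ + M₂. Define Ñ₁ := ((Q₁+N₁)⁻¹ + (2/α₁)·M₁)⁻¹ − Q₁ and Ñ₂ := ((Q₁+N₂)⁻¹ + (2/α₂)·M₂)⁻¹ − Q₁. Then: (i) Ñ₁ ⪯ N₁ and Ñ₂ ⪯ N₂; (ii) Ñ₁ ⪯ Ñ₂; (iii) if Q₁·M₁ = 0 then det(Q₁+Ñ₁)·det(N₁) = det(Q₁+N₁)·det(Ñ₁); (iv) if Q₂·M₂ = 0 then det(Q₁+Q₂+Ñ₂)·det(Q₁+N₂) = det(Q₁+Q₂+N₂)·det(Q₁+Ñ₂). -/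
/-!
The KKT relation says that `C := (α₁/2)(Q₁+N₁)⁻¹ + M₁ = (α₂/2)(Q₁+N₂)⁻¹ + M₂`, hence
`Q₁ + Ñᵢ = ((Q₁+Nᵢ)⁻¹ + (2/αᵢ)Mᵢ)⁻¹ = (αᵢ/2) C⁻¹` for both receivers, and
`Ñ₂ - Ñ₁ = ((α₂-α₁)/2) C⁻¹ ⪰ 0`. The bounds `Ñᵢ ⪯ Nᵢ` are the antitonicity of inversion in
the Loewner order, `(K⁻¹ + S)⁻¹ ⪯ K` for `S ⪰ 0`. For the determinant identities, `T S = 0`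
gives `T K⁻¹ = T (K⁻¹ + S)`, so `T + (K⁻¹ + S)⁻¹ = (T + K) K⁻¹ (K⁻¹ + S)⁻¹`; taking
determinants with `T = -Q₁`, resp. `T = Q₂`, yields (iii) and (iv).
-/

open Matrix

namespace Matrix

variable {n : Type*} [Fintype n] [DecidableEq n]

section CommRing

variable {R : Type*} [CommRing R]

theorem inv_sub_inv_eq_add_mul_inv_mul {A B : Matrix n n R} (hA : IsUnit A.det)
    (hB : IsUnit B.det) :
    A⁻¹ - B⁻¹ = B⁻¹ * (B - A) * B⁻¹ + B⁻¹ * (B - A) * A⁻¹ * (B - A) * B⁻¹ := by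
  have key : B⁻¹ * (B - A) * A⁻¹ = A⁻¹ - B⁻¹ := by
    rw [mul_sub, sub_mul, nonsing_inv_mul _ hB, one_mul, Matrix.mul_assoc,
      mul_nonsing_inv _ hA, mul_one]
  calc A⁻¹ - B⁻¹ = B⁻¹ * (B - A) * A⁻¹ * (A + (B - A)) * B⁻¹ := by
        rw [add_sub_cancel, Matrix.mul_assoc _ B, mul_nonsing_inv _ hB, mul_one, key]
    _ = _ := by
        rw [mul_add, add_mul, Matrix.mul_assoc _ A⁻¹ A, nonsing_inv_mul _ hA, mul_one]

theorem det_add_inv_inv_add_mul_det {A S T : Matrix n n R} (hA : IsUnit A.det)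
    (hB : IsUnit (A⁻¹ + S).det) (hTS : T * S = 0) :
    (T + (A⁻¹ + S)⁻¹).det * A.det = (T + A).det * (A⁻¹ + S)⁻¹.det := by
  have hTA : T * A⁻¹ = T * (A⁻¹ + S) := by rw [mul_add, hTS, add_zero]
  have hfactor : T + (A⁻¹ + S)⁻¹ = (T + A) * A⁻¹ * (A⁻¹ + S)⁻¹ := by
    rw [add_mul, mul_nonsing_inv _ hA, add_mul, one_mul, hTA, Matrix.mul_assoc,
      mul_nonsing_inv _ hB, mul_one]
  rw [hfactor, det_mul, det_mul, mul_right_comm, mul_assoc _ A⁻¹.det,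
    A.det_nonsing_inv_mul_det hA, mul_one]

end CommRing

section Field

variable {K : Type*} [Field K]

theorem inv_add_inv_smul {A M : Matrix n n K} {a : K} (ha : a ≠ 0)
    (h : IsUnit (a • A + M).det) :
    (A + a⁻¹ • M)⁻¹ = a • (a • A + M)⁻¹ := by
  rw [show A + a⁻¹ • M = a⁻¹ • (a • A + M) by
    rw [smul_add, smul_smul, inv_mul_cancel₀ ha, one_smul]]
  exact inv_eq_left_inv <| by
    rw [smul_mul_smul_comm, mul_inv_cancel₀ ha, one_smul, nonsing_inv_mul _ h]

variable [PartialOrder K] [StarRing K] [StarOrderedRing K]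

theorem PosDef.posSemidef_inv_sub_inv_s11 {A B : Matrix n n K} (hA : A.PosDef)
    (hAB : (B - A).PosSemidef) : (A⁻¹ - B⁻¹).PosSemidef := by
  have hB : B.PosDef := by simpa using hA.add_posSemidef hAB
  have hBinv : (B⁻¹)ᴴ = B⁻¹ := hB.inv.isHermitian.eq
  rw [inv_sub_inv_eq_add_mul_inv_mul (isUnit_iff_isUnit_det _ |>.mp hA.isUnit)
    (isUnit_iff_isUnit_det _ |>.mp hB.isUnit)]
  refine .add ?_ ?_
  · simpa [hBinv] using hAB.mul_mul_conjTranspose_same B⁻¹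
  · simpa [hBinv, hAB.isHermitian.eq, Matrix.mul_assoc] using
      hA.inv.posSemidef.conjTranspose_mul_mul_same ((B - A) * B⁻¹)

theorem PosDef.posSemidef_sub_inv_inv_add_s11 {A S : Matrix n n K} (hA : A.PosDef)
    (hS : S.PosSemidef) : (A - (A⁻¹ + S)⁻¹).PosSemidef := by
  simpa [nonsing_inv_nonsing_inv _ (isUnit_iff_isUnit_det _ |>.mp hA.isUnit)] using
    hA.inv.posSemidef_inv_sub_inv_s11 (B := A⁻¹ + S) (by simpa using hS)

end Field

end Matrix

theorem stmt_11_general {n : ℕ} (α₁ α₂ : ℝ) (hα₁ : 0 < α₁) (hα₁₂ : α₁ ≤ α₂)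
    (Q₁ Q₂ M₁ M₂ N₁ N₂ Ntil₁ Ntil₂ : Matrix (Fin n) (Fin n) ℝ)
    (hQ₁ : Q₁.PosSemidef)
    (hM₁ : M₁.PosSemidef) (hM₂ : M₂.PosSemidef)
    (hN₁ : N₁.PosDef) (hN₂ : N₂.PosDef)
    (hrel : (α₁ / 2) • (Q₁ + N₁)⁻¹ + M₁ = (α₂ / 2) • (Q₁ + N₂)⁻¹ + M₂)
    (hNtil₁ : Ntil₁ = ((Q₁ + N₁)⁻¹ + (2 / α₁) • M₁)⁻¹ - Q₁)
    (hNtil₂ : Ntil₂ = ((Q₁ + N₂)⁻¹ + (2 / α₂) • M₂)⁻¹ - Q₁) :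
    (N₁ - Ntil₁).PosSemidef ∧ (N₂ - Ntil₂).PosSemidef ∧
    (Ntil₂ - Ntil₁).PosSemidef ∧
    (Q₁ * M₁ = 0 → (Q₁ + Ntil₁).det * N₁.det = (Q₁ + N₁).det * Ntil₁.det) ∧
    (Q₂ * M₂ = 0 →
      (Q₁ + Q₂ + Ntil₂).det * (Q₁ + N₂).det = (Q₁ + Q₂ + N₂).det * (Q₁ + Ntil₂).det) := by
  have hα₂ : 0 < α₂ := hα₁.trans_le hα₁₂
  have hK₁ : (Q₁ + N₁).PosDef := hN₁.posSemidef_add hQ₁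
  have hK₂ : (Q₁ + N₂).PosDef := hN₂.posSemidef_add hQ₁
  have hS₁ : ((2 / α₁) • M₁).PosSemidef := hM₁.smul (by positivity)
  have hS₂ : ((2 / α₂) • M₂).PosSemidef := hM₂.smul (by positivity)
  set C := (α₁ / 2) • (Q₁ + N₁)⁻¹ + M₁
  have hC : C.PosDef := (hK₁.inv.smul (by positivity)).add_posSemidef hM₁
  have hB₁ : ((Q₁ + N₁)⁻¹ + (2 / α₁) • M₁)⁻¹ = (α₁ / 2) • C⁻¹ := by
    rw [← inv_div, inv_add_inv_smul (by positivity) hC.det_pos.ne'.isUnit]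
  have hB₂ : ((Q₁ + N₂)⁻¹ + (2 / α₂) • M₂)⁻¹ = (α₂ / 2) • C⁻¹ := by
    rw [← inv_div, inv_add_inv_smul (by positivity) (hrel ▸ hC.det_pos.ne'.isUnit), ← hrel]
  subst hNtil₁ hNtil₂
  refine ⟨?_, ?_, ?_, fun hQM => ?_, fun hQM => ?_⟩
  · simpa [sub_sub_eq_add_sub, add_comm] using hK₁.posSemidef_sub_inv_inv_add_s11 hS₁
  · simpa [sub_sub_eq_add_sub, add_comm] using hK₂.posSemidef_sub_inv_inv_add_s11 hS₂
  · rw [hB₁, hB₂, sub_sub_sub_cancel_right, ← sub_smul]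
    exact hC.inv.posSemidef.smul (by linarith)
  · have h := det_add_inv_inv_add_mul_det (T := -Q₁) hK₁.det_pos.ne'.isUnit
      (hK₁.inv.add_posSemidef hS₁).det_pos.ne'.isUnit (by simp [hQM])
    rw [neg_add_cancel_left, neg_add_eq_sub] at h
    rw [add_sub_cancel]
    linear_combination -h
  · have h := det_add_inv_inv_add_mul_det (T := Q₂) hK₂.det_pos.ne'.isUnit
      (hK₂.inv.add_posSemidef hS₂).det_pos.ne'.isUnit (by simp [hQM])
    rw [add_sub_cancel, add_assoc, add_left_comm, add_sub_cancel, h, ← add_assoc, add_comm Q₂]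

/-- channel-enhancement construction in the proof of Theorem 4 of
the paper. With `0 < α₁ ≤ α₂` and the KKT relation
`(α₁/2)(Q₁+N₁)⁻¹ + M₁ = (α₂/2)(Q₁+N₂)⁻¹ + M₂`, the enhanced noise covariances
`Ñ₁ := ((Q₁+N₁)⁻¹ + (2/α₁)M₁)⁻¹ − Q₁` and `Ñ₂ := ((Q₁+N₂)⁻¹ + (2/α₂)M₂)⁻¹ − Q₁`
satisfy: (i) `Ñ₁ ⪯ N₁`, `Ñ₂ ⪯ N₂`; (ii) `Ñ₁ ⪯ Ñ₂`; (iii) if `Q₁M₁ = 0` then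
`det(Q₁+Ñ₁)·det N₁ = det(Q₁+N₁)·det Ñ₁`; (iv) if `Q₂M₂ = 0` then
`det(Q₁+Q₂+Ñ₂)·det(Q₁+N₂) = det(Q₁+Q₂+N₂)·det(Q₁+Ñ₂)`. -/
theorem stmt_11 {n : ℕ} (α₁ α₂ : ℝ) (hα₁ : 0 < α₁) (hα₁₂ : α₁ ≤ α₂)
    (Q₁ Q₂ M₁ M₂ N₁ N₂ Ntil₁ Ntil₂ : Matrix (Fin n) (Fin n) ℝ)
    (hQ₁ : Q₁.PosSemidef) (hQ₂ : Q₂.PosSemidef)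
    (hM₁ : M₁.PosSemidef) (hM₂ : M₂.PosSemidef)
    (hN₁ : N₁.PosDef) (hN₂ : N₂.PosDef)
    (hrel : (α₁ / 2) • (Q₁ + N₁)⁻¹ + M₁ = (α₂ / 2) • (Q₁ + N₂)⁻¹ + M₂)
    (hNtil₁ : Ntil₁ = ((Q₁ + N₁)⁻¹ + (2 / α₁) • M₁)⁻¹ - Q₁)
    (hNtil₂ : Ntil₂ = ((Q₁ + N₂)⁻¹ + (2 / α₂) • M₂)⁻¹ - Q₁) :
    (N₁ - Ntil₁).PosSemidef ∧ (N₂ - Ntil₂).PosSemidef ∧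
    (Ntil₂ - Ntil₁).PosSemidef ∧
    (Q₁ * M₁ = 0 → (Q₁ + Ntil₁).det * N₁.det = (Q₁ + N₁).det * Ntil₁.det) ∧
    (Q₂ * M₂ = 0 →
      (Q₁ + Q₂ + Ntil₂).det * (Q₁ + N₂).det = (Q₁ + Q₂ + N₂).det * (Q₁ + Ntil₂).det) :=
  stmt_11_general α₁ α₂ hα₁ hα₁₂ Q₁ Q₂ M₁ M₂ N₁ N₂ Ntil₁ Ntil₂ hQ₁ hM₁ hM₂ hN₁ hN₂ hrel hNtil₁
    hNtil₂
end

section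
/- Let H be an r×n real matrix, G an e×n real matrix, and S₁ an n×n real symmetric PSD matrix. For every n×n real symmetric matrix S₂ with S₁ ⪯ S₂, define C(S₂) := sup { (1/2)·log det(I + H Q₁ Hᵀ) − (1/2)·log det(I + G Q₁ Gᵀ) : Q₁, Q₂ n×n real symmetric PSD with S₁ ⪯ Q₁ + Q₂ ⪯ S₂ }. Then the function S₂ ↦ C(S₂) is continuous on the set {S₂ : S₂ symmetric, S₁ ⪯ S₂} with respect to the standard topology on the space of n×n real matrices. -/
/-!
The capacity is `C(S) = sup {φ Q : 0 ≤ Q ≤ S}` (take `Q₂ = S - Q₁`), with `φ` continuous on the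
positive semidefinite cone. If `0 ≤ Q ≤ S + η` then `Q' = m Q m` with `m = S (S + η)⁻¹` satisfies
`0 ≤ Q' ≤ S`, and for `d = 1 - m` we have `Q - Q' = d Q + Q d - d Q d` with
`0 ≤ d Q d ≤ d (S + η) d ≤ η`. The inequality `± (d Q + Q d) ≤ t Q + t⁻¹ d Q d` then bounds
`‖Q - Q'‖` by `t ‖Q‖ + (1 + t⁻¹) η`, uniformly small for bounded `Q`. As `φ` is uniformly
continuous on the compact interval `[0, S₀ + 1]`, this gives `C(S) ≤ C(S') + ε` whenever
`S ≤ S' + η`, and for `S` near `S₀` this holds in both directions.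
-/

open Set Matrix

section StarOrderedRing

variable {R : Type*} [Ring R] [StarRing R] [PartialOrder R] [StarOrderedRing R]

lemma mul_mul_add_mul_mul_le {x y q : R} (hx : IsSelfAdjoint x) (hy : IsSelfAdjoint y)
    (hq : 0 ≤ q) : x * q * y + y * q * x ≤ x * q * x + y * q * y := by
  have h := star_left_conjugate_nonneg hq (x - y)
  rw [star_sub, hx.star_eq, hy.star_eq] at h
  rw [← sub_nonneg]
  convert h using 1
  noncomm_ring

variable [Algebra ℝ R] [StarModule ℝ R]

lemma mul_add_mul_le_smul_add_inv_smul {d q : R} (hd : IsSelfAdjoint d) (hq : 0 ≤ q) {t : ℝ}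
    (ht : 0 < t) : d * q + q * d ≤ t • q + t⁻¹ • (d * q * d) := by
  set c := √t
  have hc : c ≠ 0 := (Real.sqrt_pos.mpr ht).ne'
  have hx : IsSelfAdjoint (c • (1 : R)) := .smul (by simp [IsSelfAdjoint]) (.one R)
  have hy : IsSelfAdjoint (c⁻¹ • d) := .smul (by simp [IsSelfAdjoint]) hd
  convert mul_mul_add_mul_mul_le hx hy hq using 1
  · simp only [smul_mul_assoc, mul_smul_comm, one_mul, mul_one, smul_smul, mul_inv_cancel₀ hc,
      inv_mul_cancel₀ hc, one_smul, add_comm]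
  · simp only [smul_mul_assoc, mul_smul_comm, one_mul, mul_one, smul_smul, ← mul_inv, c,
      Real.mul_self_sqrt ht.le]

end StarOrderedRing

lemma div_mul_self_mul_div_le {b c : ℝ} (hb : 0 < b) (hc : 0 ≤ c) (hcb : c ≤ b) :
    c / b * b * (c / b) ≤ c := by
  rw [div_mul_cancel₀ c hb.ne', ← mul_div_assoc, div_le_iff₀ hb]
  exact mul_le_mul_of_nonneg_left hcb hc

lemma cfc_mul_mul_self {A : Type*} [TopologicalSpace A] [Ring A] [StarRing A] [Algebra ℝ A]
    [ContinuousFunctionalCalculus ℝ A IsSelfAdjoint] (u v : ℝ → ℝ) (a : A)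
    (hu : ContinuousOn u (spectrum ℝ a)) (hv : ContinuousOn v (spectrum ℝ a)) :
    cfc u a * cfc v a * cfc u a = cfc (fun x => u x * v x * u x) a := by
  rw [cfc_mul (fun x => u x * v x) u a (hu.mul hv), cfc_mul u v a]

lemma sSup_image_Icc_le_add {α : Type*} [Preorder α] {φ : α → ℝ} {a s s' : α} (has : a ≤ s)
    {ε : ℝ} (hbdd : BddAbove (φ '' Icc a s'))
    (h : ∀ q ∈ Icc a s, ∃ q' ∈ Icc a s', φ q ≤ φ q' + ε) :
    sSup (φ '' Icc a s) ≤ sSup (φ '' Icc a s') + ε :=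
  csSup_le ((nonempty_Icc.mpr has).image φ) <| forall_mem_image.mpr fun q hq => by
    obtain ⟨q', hq', hle⟩ := h q hq
    exact hle.trans (add_le_add (le_csSup hbdd (mem_image_of_mem φ hq')) le_rfl)

lemma exists_add_mem_Icc_iff {α : Type*} [AddCommGroup α] [PartialOrder α] [IsOrderedAddMonoid α]
    {s₁ s₂ x : α} (h : s₁ ≤ s₂) :
    (∃ y, 0 ≤ x ∧ 0 ≤ y ∧ s₁ ≤ x + y ∧ x + y ≤ s₂) ↔ x ∈ Icc 0 s₂ := by
  constructor
  · rintro ⟨y, hx, hy, -, hxy⟩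
    exact ⟨hx, (le_add_of_nonneg_right hy).trans hxy⟩
  · rintro ⟨hx, hxs⟩
    exact ⟨s₂ - x, hx, sub_nonneg.mpr hxs, by rwa [add_sub_cancel], by rw [add_sub_cancel]⟩

section Isometric

variable {A : Type*} [NormedRing A] [StarRing A] [NormedAlgebra ℝ A] [PartialOrder A]
  [StarOrderedRing A] [IsometricContinuousFunctionalCalculus ℝ A IsSelfAdjoint]
  [NonnegSpectrumClass ℝ A]

lemma IsSelfAdjoint.norm_le_iff {a : A} (ha : IsSelfAdjoint a) {r : ℝ} (hr : 0 ≤ r) :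
    ‖a‖ ≤ r ↔ -algebraMap ℝ A r ≤ a ∧ a ≤ algebraMap ℝ A r := by
  rw [← map_neg, algebraMap_le_iff_le_spectrum, le_algebraMap_iff_spectrum_le, ← forall₂_and]
  nth_rw 1 [← cfc_id' ℝ a]
  rw [norm_cfc_le_iff _ _ hr]
  simp only [Real.norm_eq_abs, abs_le]

lemma IsSelfAdjoint.le_algebraMap_norm {a : A} (ha : IsSelfAdjoint a) :
    a ≤ algebraMap ℝ A ‖a‖ :=
  ((ha.norm_le_iff (norm_nonneg a)).mp le_rfl).2

lemma exists_add_eq_one_conjugate_le {s : A} (hs : 0 ≤ s) {η : ℝ} (hη : 0 < η) :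
    ∃ m d : A, IsSelfAdjoint m ∧ IsSelfAdjoint d ∧ m + d = 1 ∧
      m * (s + algebraMap ℝ A η) * m ≤ s ∧ d * (s + algebraMap ℝ A η) * d ≤ algebraMap ℝ A η := by
  have hpos : ∀ x ∈ spectrum ℝ s, 0 < x + η := fun x hx =>
    add_pos_of_nonneg_of_pos (spectrum_nonneg_of_nonneg hs hx) hη
  have hden : ContinuousOn (fun x : ℝ => x + η) (spectrum ℝ s) := by fun_prop
  have hdiv : ∀ c : ℝ → ℝ, ContinuousOn c (spectrum ℝ s) →
      ContinuousOn (fun x => c x / (x + η)) (spectrum ℝ s) := fun c hc =>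
    hc.div hden fun x hx => (hpos x hx).ne'
  have hm : ContinuousOn (fun x => x / (x + η)) (spectrum ℝ s) := hdiv _ continuousOn_id
  have hd : ContinuousOn (fun x => η / (x + η)) (spectrum ℝ s) := hdiv _ continuousOn_const
  have ha : s + algebraMap ℝ A η = cfc (fun x => x + η) s := by
    rw [cfc_add_const η (fun x => x) s continuousOn_id (.of_nonneg hs), cfc_id' ℝ s]
  refine ⟨cfc (fun x => x / (x + η)) s, cfc (fun x => η / (x + η)) s, cfc_predicate _ _,
    cfc_predicate _ _, ?_, ?_, ?_⟩
  · rw [← cfc_add _ _ _ hm hd, ← cfc_one ℝ s]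
    refine cfc_congr fun x hx => ?_
    rw [Pi.one_apply, ← add_div, div_self (hpos x hx).ne']
  · rw [ha, cfc_mul_mul_self _ _ s hm hden]
    conv_rhs => rw [← cfc_id' ℝ s]
    exact cfc_mono fun x hx => div_mul_self_mul_div_le (hpos x hx)
      (spectrum_nonneg_of_nonneg hs hx) (by linarith)
  · rw [ha, cfc_mul_mul_self _ _ s hd hden]
    exact cfc_le_algebraMap _ _ _ fun x hx => div_mul_self_mul_div_le (hpos x hx) hη.le
      (by linarith [spectrum_nonneg_of_nonneg hs hx])

variable [StarModule ℝ A]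

lemma norm_le_norm_of_nonneg_of_le {a b : A} (ha : 0 ≤ a) (hab : a ≤ b) : ‖a‖ ≤ ‖b‖ := by
  refine ((IsSelfAdjoint.of_nonneg ha).norm_le_iff (norm_nonneg b)).mpr ⟨?_, ?_⟩
  · exact (neg_nonpos.mpr (algebraMap_nonneg A (norm_nonneg b))).trans ha
  · exact hab.trans (IsSelfAdjoint.of_nonneg (ha.trans hab)).le_algebraMap_norm

lemma IsSelfAdjoint.le_add_algebraMap_of_norm_sub_le {a b : A} (ha : IsSelfAdjoint a)
    (hb : IsSelfAdjoint b) {r : ℝ} (h : ‖a - b‖ ≤ r) : a ≤ b + algebraMap ℝ A r := by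
  rw [← sub_le_iff_le_add']
  exact (ha.sub hb).le_algebraMap_norm.trans (algebraMap_mono A h)

lemma exists_mem_Icc_norm_sub_le {s q : A} (hs : 0 ≤ s) (hq : 0 ≤ q) {η : ℝ} (hη : 0 < η)
    (hqs : q ≤ s + algebraMap ℝ A η) {t : ℝ} (ht : 0 < t) :
    ∃ q' ∈ Icc 0 s, ‖q - q'‖ ≤ t * ‖q‖ + (1 + t⁻¹) * η := by
  obtain ⟨m, d, hm, hd, hmd, hms, hdη⟩ := exists_add_eq_one_conjugate_le hs hη
  obtain rfl : m = 1 - d := eq_sub_of_add_eq hmd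
  have conj : ∀ {x : A}, IsSelfAdjoint x → ∀ {a b : A}, a ≤ b → x * a * x ≤ x * b * x :=
    fun {x} hx _ _ hab => by simpa only [hx.star_eq] using star_left_conjugate_le_conjugate hab x
  have conj_nonneg : ∀ {x : A}, IsSelfAdjoint x → 0 ≤ x * q * x := fun {x} hx => by
    simpa only [hx.star_eq] using star_left_conjugate_nonneg hq x
  have hdiff : q - (1 - d) * q * (1 - d) = d * q + q * d - d * q * d := by noncomm_ring
  have hE : t • q + t⁻¹ • (d * q * d) + d * q * d ≤
      algebraMap ℝ A (t * ‖q‖ + (1 + t⁻¹) * η) := by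
    rw [show t * ‖q‖ + (1 + t⁻¹) * η = t * ‖q‖ + t⁻¹ * η + η by ring, map_add, map_add, map_mul,
      map_mul, ← Algebra.smul_def, ← Algebra.smul_def]
    have hdqd := (conj hd hqs).trans hdη
    gcongr
    exact (IsSelfAdjoint.of_nonneg hq).le_algebraMap_norm
  have hsa : IsSelfAdjoint (q - (1 - d) * q * (1 - d)) :=
    (IsSelfAdjoint.of_nonneg hq).sub (.of_nonneg (conj_nonneg hm))
  refine ⟨(1 - d) * q * (1 - d), ⟨conj_nonneg hm, (conj hm hqs).trans hms⟩,
    (hsa.norm_le_iff (by positivity)).mpr ⟨neg_le.mp (le_trans ?_ hE), le_trans ?_ hE⟩⟩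
  · have h := mul_add_mul_le_smul_add_inv_smul hd.neg hq ht
    simp only [neg_mul, mul_neg, neg_neg, ← neg_add] at h
    rw [hdiff, neg_sub, sub_eq_neg_add]
    exact add_le_add h le_rfl
  · rw [hdiff]
    exact (sub_le_self _ (conj_nonneg hd)).trans ((mul_add_mul_le_smul_add_inv_smul hd hq ht).trans
      (le_add_of_nonneg_right (conj_nonneg hd)))

lemma exists_pos_forall_exists_mem_Icc_norm_sub_lt {R δ : ℝ} (hR : 0 ≤ R) (hδ : 0 < δ) :
    ∃ η > 0, ∀ s q : A, 0 ≤ s → 0 ≤ q → q ≤ s + algebraMap ℝ A η → ‖q‖ ≤ R →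
      ∃ q' ∈ Icc 0 s, ‖q - q'‖ < δ := by
  set t := δ / (2 * (R + 1))
  have ht : 0 < t := by positivity
  refine ⟨t * δ / (4 * (t + 1)), by positivity, fun s q hs hq hqs hqR => ?_⟩
  obtain ⟨q', hq', hdist⟩ := exists_mem_Icc_norm_sub_le hs hq (by positivity) hqs ht
  have h₁ : t * ‖q‖ < δ / 2 := by
    calc t * ‖q‖ ≤ t * R := by gcongr
      _ < δ / 2 := by
        rw [div_mul_eq_mul_div, div_lt_div_iff₀ (by positivity) two_pos]
        nlinarith
  have h₂ : (1 + t⁻¹) * (t * δ / (4 * (t + 1))) = δ / 4 := by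
    field_simp
  exact ⟨q', hq', by linarith⟩

lemma isCompact_Icc_zero [ProperSpace A] [OrderClosedTopology A] (b : A) : IsCompact (Icc 0 b) :=
  Metric.isCompact_of_isClosed_isBounded isClosed_Icc <|
    (Metric.isBounded_closedBall (x := 0) (r := ‖b‖)).subset fun q hq => by
      simpa using norm_le_norm_of_nonneg_of_le hq.1 hq.2

lemma exists_pos_forall_sSup_image_Icc_le_add [ProperSpace A] [OrderClosedTopology A]
    {φ : A → ℝ} (hφ : ContinuousOn φ (Ici 0)) (b : A) {ε : ℝ} (hε : 0 < ε) :
    ∃ η > 0, ∀ s ∈ Icc 0 b, ∀ s' ∈ Icc 0 b, s ≤ s' + algebraMap ℝ A η →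
      sSup (φ '' Icc 0 s) ≤ sSup (φ '' Icc 0 s') + ε := by
  have hK := isCompact_Icc_zero b
  have hφK : ContinuousOn φ (Icc 0 b) := hφ.mono Icc_subset_Ici_self
  obtain ⟨δ, hδ, hφδ⟩ :=
    Metric.uniformContinuousOn_iff.mp (hK.uniformContinuousOn_of_continuous hφK) ε hε
  obtain ⟨η, hη, happrox⟩ :=
    exists_pos_forall_exists_mem_Icc_norm_sub_lt (A := A) (norm_nonneg b) hδ
  refine ⟨η, hη, fun s hs s' hs' hss' => ?_⟩
  refine sSup_image_Icc_le_add hs.1 ((hK.image_of_continuousOn hφK).bddAbove.mono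
    (image_mono (Icc_subset_Icc le_rfl hs'.2))) fun q hq => ?_
  obtain ⟨q', hq', hqq'⟩ := happrox s' q hs'.1 hq.1 (hq.2.trans hss')
    (norm_le_norm_of_nonneg_of_le hq.1 (hq.2.trans hs.2))
  have := hφδ q ⟨hq.1, hq.2.trans hs.2⟩ q' ⟨hq'.1, hq'.2.trans hs'.2⟩ (by rwa [dist_eq_norm])
  rw [Real.dist_eq, abs_lt] at this
  exact ⟨q', hq', by linarith⟩

theorem continuousOn_sSup_image_Icc [ProperSpace A] [OrderClosedTopology A] {φ : A → ℝ}
    (hφ : ContinuousOn φ (Ici 0)) : ContinuousOn (fun s => sSup (φ '' Icc 0 s)) (Ici 0) := by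
  intro s₀ hs₀
  rw [Metric.continuousWithinAt_iff]
  intro ε hε
  set b := s₀ + algebraMap ℝ A 1
  obtain ⟨η, hη, compare⟩ := exists_pos_forall_sSup_image_Icc_le_add hφ b (half_pos hε)
  refine ⟨min η 1, by positivity, fun s hs hss₀ => ?_⟩
  rw [dist_eq_norm] at hss₀
  have hs' := IsSelfAdjoint.of_nonneg hs
  have hs₀' := IsSelfAdjoint.of_nonneg hs₀
  have hη' : ‖s - s₀‖ ≤ η := hss₀.le.trans (min_le_left _ _)
  have h₁ : s ≤ s₀ + algebraMap ℝ A η := hs'.le_add_algebraMap_of_norm_sub_le hs₀' hη'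
  have h₂ : s₀ ≤ s + algebraMap ℝ A η :=
    hs₀'.le_add_algebraMap_of_norm_sub_le hs' (by rwa [norm_sub_rev])
  have hs_mem : s ∈ Icc 0 b :=
    ⟨hs, hs'.le_add_algebraMap_of_norm_sub_le hs₀' (hss₀.le.trans (min_le_right _ _))⟩
  have hs₀_mem : s₀ ∈ Icc 0 b := ⟨hs₀, le_add_of_nonneg_right (algebraMap_nonneg A zero_le_one)⟩
  rw [Real.dist_eq, abs_lt]
  constructor <;> linarith [compare s hs_mem s₀ hs₀_mem h₁, compare s₀ hs₀_mem s hs_mem h₂]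

end Isometric

namespace Matrix

open scoped MatrixOrder ComplexOrder

variable {n 𝕜 : Type*} [Fintype n] [RCLike 𝕜]

theorem isClosed_setOf_posSemidef : IsClosed {A : Matrix n n 𝕜 | A.PosSemidef} := by
  simp only [posSemidef_iff_dotProduct_mulVec, ofPred_and, ofPred_forall]
  exact (isClosed_eq (by fun_prop) continuous_id).inter
    (isClosed_iInter fun x => isClosed_le continuous_const (by fun_prop))

instance : OrderClosedTopology (Matrix n n 𝕜) :=
  ⟨isClosed_le_of_isClosed_nonneg <| by
    simpa only [nonneg_iff_posSemidef] using isClosed_setOf_posSemidef⟩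

end Matrix

section SecrecyRate

variable {m n k : Type*} [Fintype m] [DecidableEq m] [Fintype n] [Fintype k] [DecidableEq k]

lemma continuousOn_log_det_one_add_mul_mul_transpose (H : Matrix m n ℝ) :
    ContinuousOn (fun Q : Matrix n n ℝ => Real.log (1 + H * Q * Hᵀ).det) {Q | Q.PosSemidef} := by
  refine ContinuousOn.log (by fun_prop) fun Q hQ => ?_
  have hpsd : (H * Q * Hᵀ).PosSemidef := by
    simpa only [conjTranspose_eq_transpose_of_trivial] using hQ.mul_mul_conjTranspose_same H
  exact (PosDef.one.add_posSemidef hpsd).det_pos.ne'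

noncomputable def secrecyRate (H : Matrix m n ℝ) (G : Matrix k n ℝ) (Q : Matrix n n ℝ) : ℝ :=
  (1/2) * Real.log (1 + H * Q * Hᵀ).det - (1/2) * Real.log (1 + G * Q * Gᵀ).det

lemma continuousOn_secrecyRate (H : Matrix m n ℝ) (G : Matrix k n ℝ) :
    ContinuousOn (secrecyRate H G) {Q | Q.PosSemidef} :=
  (continuousOn_const.mul (continuousOn_log_det_one_add_mul_mul_transpose H)).sub
    (continuousOn_const.mul (continuousOn_log_det_one_add_mul_mul_transpose G))

end SecrecyRate

/-- Appendix of the paper. The secrecy capacity under a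
double-sided correlation matrix constraint,
`C(S₂) = sup {½ log det(I + H Q₁ Hᵀ) − ½ log det(I + G Q₁ Gᵀ) :
              Q₁, Q₂ ⪰ 0, S₁ ⪯ Q₁ + Q₂ ⪯ S₂}`,
is continuous in the upper constraint matrix `S₂` on `{S₂ symmetric : S₁ ⪯ S₂}`. -/
theorem stmt_16 {r e n : ℕ} (H : Matrix (Fin r) (Fin n) ℝ) (G : Matrix (Fin e) (Fin n) ℝ)
    (S₁ : Matrix (Fin n) (Fin n) ℝ) (hS₁ : S₁.PosSemidef) :
    ContinuousOn
      (fun S₂ : Matrix (Fin n) (Fin n) ℝ =>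
        sSup {c : ℝ | ∃ Q₁ Q₂ : Matrix (Fin n) (Fin n) ℝ,
          Q₁.PosSemidef ∧ Q₂.PosSemidef ∧
          (Q₁ + Q₂ - S₁).PosSemidef ∧ (S₂ - (Q₁ + Q₂)).PosSemidef ∧
          c = (1/2) * Real.log (1 + H * Q₁ * Hᵀ).det
            - (1/2) * Real.log (1 + G * Q₁ * Gᵀ).det})
      {S₂ : Matrix (Fin n) (Fin n) ℝ | S₂.IsHermitian ∧ (S₂ - S₁).PosSemidef} := by
  open scoped MatrixOrder in
  have hC : ContinuousOn (fun S₂ => sSup (secrecyRate H G '' Icc 0 S₂)) (Ici 0) := by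
    have hφ : ContinuousOn (secrecyRate H G) (Ici 0) := by
      simpa only [Ici, nonneg_iff_posSemidef] using continuousOn_secrecyRate H G
    -- The operator norm makes real matrices a `C⋆`-like algebra and induces the product topology.
    open scoped Matrix.Norms.L2Operator in
    exact continuousOn_sSup_image_Icc hφ
  refine (hC.mono fun S₂ hS₂ => hS₁.nonneg.trans hS₂.2).congr fun S₂ hS₂ => congrArg sSup ?_
  ext c
  constructor
  · rintro ⟨Q₁, Q₂, h₁, h₂, h₃, h₄, rfl⟩
    exact ⟨Q₁, (exists_add_mem_Icc_iff hS₂.2).mp ⟨Q₂, h₁.nonneg, h₂.nonneg, h₃, h₄⟩, rfl⟩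
  · rintro ⟨Q₁, hQ₁, rfl⟩
    obtain ⟨Q₂, h₁, h₂, h₃, h₄⟩ := (exists_add_mem_Icc_iff hS₂.2).mpr hQ₁
    exact ⟨Q₁, Q₂, nonneg_iff_posSemidef.mp h₁, nonneg_iff_posSemidef.mp h₂, h₃, h₄, rfl⟩
end
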